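/- Let a be a nonzero real number, b > 0 and ε > 0. Then there exists C = C(a,b,ε) > 0 such that for every t ≥ 1, the function x ↦ ∫₁^t s^{-1-ε} exp(-(a s - |x|)²/(b s)) ds belongs to L²(ℝ) with ‖∫₁^t s^{-1-ε} exp(-(a s - |·|)²/(b s)) ds‖_{L²(ℝ)} ≤ C, with C independent of t. -/

import Mathlib

/-!
Uniformly in `t`, the time integral is bounded pointwise by `K (1 + |x|) ^ (-(1/2 + ε))`,
which is square integrable because `1/2 + ε > 1/2`. Replacing `a` by `|a|` only enlarges the
kernel. For `r = |x| ≥ 1`, split the times `s` according to whether `|a| s` is comparable to `r`: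
there `s ^ (-1-ε) ≲ r ^ (-1-ε)` while the Gaussian in `s` has width `≲ √r`, contributing
`r ^ (-1/2-ε)`; elsewhere the exponent is at least `|a| r / (2 b)`, and this exponential decay in
`r` beats any power.
-/
open MeasureTheory Real Set

lemma exists_exp_neg_mul_le_rpow_neg {δ : ℝ} (hδ : 0 < δ) (p : ℝ) :
    ∃ C, ∀ r, 1 ≤ r → exp (-(δ * r)) ≤ C * r ^ (-p) := by
  set n := ⌈p⌉₊
  refine ⟨n.factorial / δ ^ n, fun r hr => ?_⟩
  have hr0 : 0 < r := one_pos.trans_le hr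
  calc exp (-(δ * r)) = (exp (δ * r))⁻¹ := exp_neg _
    _ ≤ ((δ * r) ^ n / n.factorial)⁻¹ :=
      inv_anti₀ (by positivity) (pow_div_factorial_le_exp _ (by positivity) n)
    _ = n.factorial / δ ^ n * r ^ (-(n : ℝ)) := by
      rw [rpow_neg hr0.le, rpow_natCast, mul_pow]; field_simp
    _ ≤ n.factorial / δ ^ n * r ^ (-p) := by
      gcongr
      exact Nat.le_ceil p

lemma max_one_rpow_neg_le {p r : ℝ} (hp : 0 ≤ p) (hr : 0 ≤ r) :
    max 1 r ^ (-p) ≤ 2 ^ p * (1 + r) ^ (-p) := by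
  calc max 1 r ^ (-p) ≤ ((1 + r) / 2) ^ (-p) :=
        rpow_le_rpow_of_nonpos (by positivity)
          (by linarith [le_max_left 1 r, le_max_right 1 r]) (neg_nonpos.2 hp)
    _ = 2 ^ p * (1 + r) ^ (-p) := by
      rw [div_rpow (by positivity) zero_le_two, rpow_neg zero_le_two]; field_simp

lemma memLp_two_one_add_abs_rpow_neg {p : ℝ} (hp : 1 / 2 < p) :
    MemLp (fun x : ℝ => (1 + |x|) ^ (-p)) 2 volume := by
  rw [memLp_two_iff_integrable_sq (Measurable.aestronglyMeasurable (by fun_prop))]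
  refine (integrable_one_add_norm (E := ℝ) (r := 2 * p) (by simp; linarith)).congr
    (Filter.Eventually.of_forall fun x => ?_)
  dsimp only
  rw [norm_eq_abs, ← rpow_natCast, ← rpow_mul (by positivity)]
  ring_nf

lemma sq_abs_mul_sub_le (a : ℝ) {s r : ℝ} (hs : 0 ≤ s) (hr : 0 ≤ r) :
    (|a| * s - r) ^ 2 ≤ (a * s - r) ^ 2 := by
  have : (|a| * s) ^ 2 = (a * s) ^ 2 := by rw [mul_pow, mul_pow, sq_abs]
  nlinarith [mul_le_mul_of_nonneg_right (le_abs_self a) (mul_nonneg hs hr)]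

lemma mul_le_two_mul_sq_sub {u r : ℝ} (hu : 0 ≤ u) (h : 2 * u < r ∨ 2 * r < u) :
    u * r ≤ 2 * (u - r) ^ 2 := by
  rcases h with h | h <;> nlinarith

lemma rpow_neg_mul_exp_le {A b q r s : ℝ} (hA : 0 < A) (hb : 0 < b) (hq : 0 ≤ q) (hr : 0 < r)
    (hs : 0 < s) :
    s ^ (-q) * exp (-(A * s - r) ^ 2 / (b * s)) ≤
      s ^ (-q) * exp (-(A / (2 * b) * r)) +
        (2 * A / r) ^ q * exp (-(A / (2 * b) / r) * (A * s - r) ^ 2) := by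
  by_cases hnear : r ≤ 2 * (A * s) ∧ A * s ≤ 2 * r
  · have hpow : s ^ (-q) ≤ (2 * A / r) ^ q := by
      have hs' : r / (2 * A) ≤ s := by rw [div_le_iff₀ (by positivity)]; linarith
      calc s ^ (-q) ≤ (r / (2 * A)) ^ (-q) :=
            rpow_le_rpow_of_nonpos (by positivity) hs' (neg_nonpos.2 hq)
        _ = (2 * A / r) ^ q := by
          rw [rpow_neg (by positivity), ← inv_rpow (by positivity), inv_div]
    have hexp :
        exp (-(A * s - r) ^ 2 / (b * s)) ≤ exp (-(A / (2 * b) / r) * (A * s - r) ^ 2) := by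
      have hbs : b * s ≤ b * (2 * r / A) := by
        gcongr; rw [le_div_iff₀ hA]; linarith
      have : A / (2 * b) / r * (A * s - r) ^ 2 = (A * s - r) ^ 2 / (b * (2 * r / A)) := by
        field_simp
      rw [exp_le_exp, neg_div, neg_mul, neg_le_neg_iff, this]
      exact div_le_div_of_nonneg_left (sq_nonneg _) (by positivity) hbs
    calc s ^ (-q) * exp (-(A * s - r) ^ 2 / (b * s))
        ≤ (2 * A / r) ^ q * exp (-(A / (2 * b) / r) * (A * s - r) ^ 2) :=
          mul_le_mul hpow hexp (exp_pos _).le (by positivity)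
      _ ≤ _ := le_add_of_nonneg_left (by positivity)
  · have hfar := mul_le_two_mul_sq_sub (r := r) (mul_pos hA hs).le (by
      rw [not_and_or, not_le, not_le] at hnear; exact hnear)
    have hexp : exp (-(A * s - r) ^ 2 / (b * s)) ≤ exp (-(A / (2 * b) * r)) := by
      rw [exp_le_exp, neg_div, neg_le_neg_iff, le_div_iff₀ (by positivity)]
      calc A / (2 * b) * r * (b * s) = A * s * r / 2 := by field_simp
        _ ≤ (A * s - r) ^ 2 := by linarith
    calc s ^ (-q) * exp (-(A * s - r) ^ 2 / (b * s)) ≤ s ^ (-q) * exp (-(A / (2 * b) * r)) := by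
          gcongr
      _ ≤ _ := le_add_of_nonneg_right (by positivity)

lemma integrableOn_Ici_one_rpow {ε : ℝ} (hε : 0 < ε) :
    IntegrableOn (fun s : ℝ => s ^ (-1 - ε)) (Ici 1) := by
  rw [integrableOn_Ici_iff_integrableOn_Ioi]
  exact integrableOn_Ioi_rpow_of_lt (by linarith) one_pos

lemma setIntegral_Icc_one_rpow_le {ε : ℝ} (hε : 0 < ε) (t : ℝ) :
    ∫ s in Icc 1 t, s ^ (-1 - ε) ≤ ε⁻¹ := by
  calc ∫ s in Icc 1 t, s ^ (-1 - ε) ≤ ∫ s in Ici 1, s ^ (-1 - ε) :=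
        setIntegral_mono_set (integrableOn_Ici_one_rpow hε)
          (ae_restrict_of_forall_mem measurableSet_Ici fun s (hs : 1 ≤ s) => by positivity)
          Icc_subset_Ici_self.eventuallyLE
    _ = ε⁻¹ := by
      rw [integral_Ici_eq_integral_Ioi, integral_Ioi_rpow_of_lt (by linarith) one_pos,
        show -1 - ε + 1 = -ε by ring, one_rpow, div_neg, neg_div, neg_neg, one_div]

lemma integrable_exp_neg_mul_sq_mul_sub {A c : ℝ} (hA : A ≠ 0) (hc : 0 < c) (r : ℝ) :
    Integrable (fun s : ℝ => exp (-c * (A * s - r) ^ 2)) :=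
  ((integrable_exp_neg_mul_sq hc).comp_sub_right r).comp_mul_left' hA

lemma integral_exp_neg_mul_sq_mul_sub (A c r : ℝ) :
    ∫ s : ℝ, exp (-c * (A * s - r) ^ 2) = |A⁻¹| * √(π / c) := by
  rw [Measure.integral_comp_mul_left (fun y => exp (-c * (y - r) ^ 2)) A, smul_eq_mul,
    integral_sub_right_eq_self (fun y => exp (-c * y ^ 2)) r, integral_gaussian]

lemma setIntegral_kernel_le {a b ε r : ℝ} (ha : a ≠ 0) (hb : 0 < b) (hε : 0 < ε) (hr : 0 < r)
    (t : ℝ) :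
    ∫ s in Icc 1 t, s ^ (-1 - ε) * exp (-(a * s - r) ^ 2 / (b * s)) ≤
      ε⁻¹ * exp (-(|a| / (2 * b) * r)) +
        (2 * |a| / r) ^ (1 + ε) * (|a|⁻¹ * √(π / (|a| / (2 * b) / r))) := by
  set A := |a|
  have hA : 0 < A := abs_pos.2 ha
  set c := A / (2 * b) / r
  have hk : ∀ s ∈ Icc (1 : ℝ) t, s ^ (-1 - ε) * exp (-(a * s - r) ^ 2 / (b * s)) ≤
      s ^ (-1 - ε) * exp (-(A / (2 * b) * r)) +
        (2 * A / r) ^ (1 + ε) * exp (-c * (A * s - r) ^ 2) := by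
    intro s ⟨hs, _⟩
    have hs0 : 0 < s := one_pos.trans_le hs
    calc s ^ (-1 - ε) * exp (-(a * s - r) ^ 2 / (b * s))
        ≤ s ^ (-(1 + ε)) * exp (-(A * s - r) ^ 2 / (b * s)) := by
          rw [neg_add']
          gcongr _ * exp (-?_ / _)
          exact sq_abs_mul_sub_le a hs0.le hr.le
      _ ≤ _ := by
          rw [← neg_add']
          exact rpow_neg_mul_exp_le hA hb (by positivity) hr hs0
  have hpow : IntegrableOn (fun s : ℝ => s ^ (-1 - ε)) (Icc 1 t) :=
    (integrableOn_Ici_one_rpow hε).mono_set Icc_subset_Ici_self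
  have hgauss := integrable_exp_neg_mul_sq_mul_sub hA.ne' (show 0 < c by positivity) r
  calc ∫ s in Icc 1 t, s ^ (-1 - ε) * exp (-(a * s - r) ^ 2 / (b * s))
      ≤ ∫ s in Icc 1 t, (s ^ (-1 - ε) * exp (-(A / (2 * b) * r)) +
          (2 * A / r) ^ (1 + ε) * exp (-c * (A * s - r) ^ 2)) :=
        integral_mono_of_nonneg
          (ae_restrict_of_forall_mem measurableSet_Icc fun s (hs : s ∈ Icc 1 t) => by
            have := hs.1; positivity)
          ((hpow.mul_const _).add (hgauss.const_mul _).integrableOn)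
          (ae_restrict_of_forall_mem measurableSet_Icc hk)
    _ = (∫ s in Icc 1 t, s ^ (-1 - ε)) * exp (-(A / (2 * b) * r)) +
          (2 * A / r) ^ (1 + ε) * ∫ s in Icc 1 t, exp (-c * (A * s - r) ^ 2) := by
        rw [integral_add (hpow.mul_const _) (hgauss.const_mul _).integrableOn, integral_mul_const,
          integral_const_mul]
    _ ≤ ε⁻¹ * exp (-(A / (2 * b) * r)) +
          (2 * A / r) ^ (1 + ε) * ∫ s, exp (-c * (A * s - r) ^ 2) := by
        gcongr ?_ * _ + _ * ?_
        · exact setIntegral_Icc_one_rpow_le hε t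
        · exact setIntegral_le_integral hgauss (.of_forall fun _ => (exp_pos _).le)
    _ = _ := by rw [integral_exp_neg_mul_sq_mul_sub, abs_inv, abs_of_pos hA]

lemma setIntegral_kernel_le_inv {a b ε r : ℝ} (hb : 0 ≤ b) (hε : 0 < ε) (t : ℝ) :
    ∫ s in Icc 1 t, s ^ (-1 - ε) * exp (-(a * s - r) ^ 2 / (b * s)) ≤ ε⁻¹ := by
  refine le_trans (integral_mono_of_nonneg ?_
    ((integrableOn_Ici_one_rpow hε).mono_set Icc_subset_Ici_self) ?_)
    (setIntegral_Icc_one_rpow_le hε t)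
  · exact ae_restrict_of_forall_mem measurableSet_Icc fun s (hs : s ∈ Icc 1 t) => by
      have := hs.1; positivity
  · refine ae_restrict_of_forall_mem measurableSet_Icc fun s (hs : s ∈ Icc 1 t) => ?_
    have hs0 : 0 ≤ s := zero_le_one.trans hs.1
    refine mul_le_of_le_one_right (rpow_nonneg hs0 _) (exp_le_one_iff.2 ?_)
    exact div_nonpos_of_nonpos_of_nonneg (neg_nonpos.2 (sq_nonneg _)) (by positivity)

lemma exists_setIntegral_kernel_le_rpow {a b ε : ℝ} (ha : a ≠ 0) (hb : 0 < b) (hε : 0 < ε) :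
    ∃ C, ∀ t r, 1 ≤ r →
      ∫ s in Icc 1 t, s ^ (-1 - ε) * exp (-(a * s - r) ^ 2 / (b * s)) ≤
        C * r ^ (-(1 / 2 + ε)) := by
  set δ := |a| / (2 * b)
  have hδ : 0 < δ := by positivity
  obtain ⟨C₁, hC₁⟩ := exists_exp_neg_mul_le_rpow_neg hδ (1 / 2 + ε)
  refine ⟨ε⁻¹ * C₁ + (2 * |a|) ^ (1 + ε) * (|a|⁻¹ * √(π / δ)), fun t r hr => ?_⟩
  have hr0 : 0 < r := one_pos.trans_le hr
  have hgauss : (2 * |a| / r) ^ (1 + ε) * (|a|⁻¹ * √(π / (δ / r))) =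
      (2 * |a|) ^ (1 + ε) * (|a|⁻¹ * √(π / δ)) * r ^ (-(1 / 2 + ε)) := by
    rw [show π / (δ / r) = π / δ * r by field_simp, sqrt_mul (by positivity), sqrt_eq_rpow r,
      div_rpow (by positivity) hr0.le, show -(1 / 2 + ε) = 1 / 2 - (1 + ε) by ring,
      rpow_sub hr0]
    ring
  calc _ ≤ ε⁻¹ * exp (-(δ * r)) +
          (2 * |a| / r) ^ (1 + ε) * (|a|⁻¹ * √(π / (δ / r))) :=
        setIntegral_kernel_le ha hb hε hr0 t
    _ ≤ ε⁻¹ * (C₁ * r ^ (-(1 / 2 + ε))) +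
          (2 * |a|) ^ (1 + ε) * (|a|⁻¹ * √(π / δ)) * r ^ (-(1 / 2 + ε)) := by
        rw [hgauss]
        gcongr
        exact hC₁ r hr
    _ = _ := by ring

lemma exists_setIntegral_kernel_le_one_add_rpow {a b ε : ℝ} (ha : a ≠ 0) (hb : 0 < b)
    (hε : 0 < ε) :
    ∃ K, ∀ t r, 0 ≤ r →
      ∫ s in Icc 1 t, s ^ (-1 - ε) * exp (-(a * s - r) ^ 2 / (b * s)) ≤
        K * (1 + r) ^ (-(1 / 2 + ε)) := by
  obtain ⟨C, hC⟩ := exists_setIntegral_kernel_le_rpow ha hb hε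
  have hM : 0 ≤ max C ε⁻¹ := (inv_pos.2 hε).le.trans (le_max_right _ _)
  refine ⟨max C ε⁻¹ * 2 ^ (1 / 2 + ε), fun t r hr => ?_⟩
  calc _ ≤ max C ε⁻¹ * max 1 r ^ (-(1 / 2 + ε)) := by
        rcases le_total r 1 with hr1 | hr1
        · rw [max_eq_left hr1, one_rpow, mul_one]
          exact (setIntegral_kernel_le_inv hb.le hε t).trans (le_max_right _ _)
        · rw [max_eq_right hr1]
          exact (hC t r hr1).trans (by gcongr; exact le_max_left _ _)
    _ ≤ max C ε⁻¹ * (2 ^ (1 / 2 + ε) * (1 + r) ^ (-(1 / 2 + ε))) :=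
        mul_le_mul_of_nonneg_left (max_one_rpow_neg_le (by positivity) hr) hM
    _ = _ := by ring

theorem time_integrated_gaussian_tail_L2 (a b ε : ℝ) (ha : a ≠ 0) (hb : 0 < b)
    (hε : 0 < ε) :
    ∃ C : ℝ, 0 < C ∧ ∀ t : ℝ, 1 ≤ t →
      MemLp (fun x : ℝ =>
          ∫ s in Icc (1:ℝ) t, s ^ (-1 - ε) * Real.exp (-(a * s - |x|)^2 / (b * s))) 2 volume ∧
      eLpNorm (fun x : ℝ =>
          ∫ s in Icc (1:ℝ) t, s ^ (-1 - ε) * Real.exp (-(a * s - |x|)^2 / (b * s))) 2 volume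
        ≤ ENNReal.ofReal C := by
  obtain ⟨K, hK⟩ := exists_setIntegral_kernel_le_one_add_rpow ha hb hε
  set G : ℝ → ℝ := fun x => K * (1 + |x|) ^ (-(1 / 2 + ε))
  have hG : MemLp G 2 volume := (memLp_two_one_add_abs_rpow_neg (by linarith)).const_mul K
  refine ⟨(eLpNorm G 2 volume).toReal + 1, by positivity, fun t _ => ?_⟩
  set F : ℝ → ℝ := fun x =>
    ∫ s in Icc (1:ℝ) t, s ^ (-1 - ε) * Real.exp (-(a * s - |x|)^2 / (b * s))
  have hFG : ∀ᵐ x, ‖F x‖ ≤ ‖G x‖ := .of_forall fun x => by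
    have hF0 : 0 ≤ F x :=
      setIntegral_nonneg measurableSet_Icc fun s (hs : 1 ≤ s ∧ s ≤ t) => by
        have := hs.1; positivity
    rw [norm_of_nonneg hF0]
    exact (hK t |x| (abs_nonneg x)).trans (le_abs_self _)
  have hF : AEStronglyMeasurable F volume :=
    (StronglyMeasurable.integral_prod_right' (ν := volume.restrict (Icc 1 t))
      (f := fun q : ℝ × ℝ => q.2 ^ (-1 - ε) * exp (-(a * q.2 - |q.1|) ^ 2 / (b * q.2)))
      (by fun_prop)).aestronglyMeasurable
  refine ⟨hG.of_le hF hFG, ?_⟩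
  calc eLpNorm F 2 volume ≤ eLpNorm G 2 volume := eLpNorm_mono_ae hFG
    _ = ENNReal.ofReal (eLpNorm G 2 volume).toReal :=
        (ENNReal.ofReal_toReal hG.eLpNorm_ne_top).symm
    _ ≤ ENNReal.ofReal ((eLpNorm G 2 volume).toReal + 1) :=
        ENNReal.ofReal_le_ofReal (by linarith)
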